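/- arXiv:1805.00131 — 3 statements merged into one kernel-verified Lean document; each statement's English description precedes it below -/
import Mathlib

section
/- Let p ≥ 2 be an integer and let n, m be integers with 1 ≤ n ≤ m. Then, as real numbers, p^{-(m−n+1)} ≤ 1 − ∏_{i=0}^{n-1} (1 − p^{i−m}) ≤ 2·p^{-(m−n+1)}. (In particular, the probability that a random F_p-linear map F_p^n → F_p^m fails to be injective is of the order p^{-(m−n+1)}.) -/
lemma weierstrass_aux (a : ℕ → ℝ) (s : Finset ℕ) (h0 : ∀ i ∈ s, 0 ≤ a i)
    (h1 : ∀ i ∈ s, a i ≤ 1) : 1 - ∑ i ∈ s, a i ≤ ∏ i ∈ s, (1 - a i) := by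
  induction s using Finset.cons_induction with
  | empty => simp
  | cons j s hj ih =>
    rw [Finset.prod_cons, Finset.sum_cons]
    have h0' : ∀ i ∈ s, 0 ≤ a i := fun i hi => h0 i (Finset.mem_cons_of_mem hi)
    have h1' : ∀ i ∈ s, a i ≤ 1 := fun i hi => h1 i (Finset.mem_cons_of_mem hi)
    have ihs := ih h0' h1'
    have hj0 := h0 j (Finset.mem_cons_self j s)
    have hj1 := h1 j (Finset.mem_cons_self j s)
    have hsum : 0 ≤ ∑ i ∈ s, a i := Finset.sum_nonneg h0'
    nlinarith [ihs, hj0, hj1, hsum]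

/-- For integers `p ≥ 2` and `1 ≤ n ≤ m`, one has, in the real numbers,
`p^{-(m−n+1)} ≤ 1 − ∏_{i=0}^{n-1} (1 − p^{i−m}) ≤ 2·p^{-(m−n+1)}`.
(So the probability that a random `F_p`-linear map `F_p^n → F_p^m` fails to be injective
is of the order `p^{-(m−n+1)}`.) -/
theorem failure_probability_order (p n m : ℕ) (hp : 2 ≤ p) (hn : 1 ≤ n) (hnm : n ≤ m) :
    ((p : ℝ) ^ (m - n + 1))⁻¹ ≤ 1 - ∏ i ∈ Finset.range n, (1 - (p : ℝ) ^ ((i : ℤ) - (m : ℤ))) ∧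
    1 - ∏ i ∈ Finset.range n, (1 - (p : ℝ) ^ ((i : ℤ) - (m : ℤ))) ≤
      2 * ((p : ℝ) ^ (m - n + 1))⁻¹ := by
  set a : ℕ → ℝ := fun i => (p : ℝ) ^ ((i : ℤ) - (m : ℤ)) with ha
  have hp1 : (1 : ℝ) < (p : ℝ) := by exact_mod_cast Nat.lt_of_lt_of_le one_lt_two hp
  have hp0 : (0 : ℝ) < (p : ℝ) := lt_trans one_pos hp1
  have h0 : ∀ i, 0 < a i := fun i => zpow_pos hp0 _
  have h1 : ∀ i ∈ Finset.range n, a i ≤ 1 := by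
    intro i hi
    apply zpow_le_one_of_nonpos₀ hp1.le
    have := Finset.mem_range.mp hi
    omega
  have hkey : ((p : ℝ) ^ (m - n + 1))⁻¹ = a (n - 1) := by
    rw [ha]
    simp only
    rw [← zpow_natCast (p : ℝ) (m - n + 1), ← zpow_neg]
    congr 1
    omega
  constructor
  · -- lower bound
    rw [hkey, le_sub_comm]
    have hmem : n - 1 ∈ Finset.range n := Finset.mem_range.mpr (by omega)
    calc ∏ i ∈ Finset.range n, (1 - a i)
        ≤ 1 - a (n - 1) := by
          rw [← Finset.prod_erase_mul _ _ hmem]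
          have : ∏ i ∈ (Finset.range n).erase (n-1), (1 - a i) ≤ 1 :=
            Finset.prod_le_one (fun i hi => by linarith [h1 i (Finset.mem_of_mem_erase hi)])
              (fun i hi => by linarith [(h0 i).le])
          nlinarith [h0 (n-1), h1 (n-1) hmem]
      _ = 1 - a (n - 1) := rfl
  · -- upper bound
    have hW := weierstrass_aux a (Finset.range n) (fun i _ => (h0 i).le) h1
    have hsum : ∑ i ∈ Finset.range n, a i ≤ 2 * ((p : ℝ) ^ (m - n + 1))⁻¹ := by
      have hae : ∀ i, a i = (p : ℝ) ^ i * ((p : ℝ) ^ m)⁻¹ := by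
        intro i
        rw [ha]
        simp only
        rw [sub_eq_add_neg, zpow_add₀ hp0.ne', zpow_neg, zpow_natCast, zpow_natCast]
      simp only [hae, ← Finset.sum_mul]
      rw [geom_sum_eq hp1.ne']
      rw [div_mul_eq_mul_div, div_le_iff₀ (by linarith)]
      have hpm : ((p:ℝ)^(m-n+1))⁻¹ = (p:ℝ)^(n-1) * ((p:ℝ)^m)⁻¹ := by
        rw [eq_comm, ← zpow_natCast (p:ℝ) (n-1), ← zpow_natCast (p:ℝ) m,
          ← zpow_natCast (p:ℝ) (m-n+1), ← zpow_neg, ← zpow_neg, ← zpow_add₀ hp0.ne']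
        congr 1
        omega
      rw [hpm]
      have hpminv : (0:ℝ) < ((p:ℝ)^m)⁻¹ := by positivity
      have h2p : (p:ℝ) ≤ 2 * ((p:ℝ) - 1) := by
        have : (2:ℝ) ≤ (p:ℝ) := by exact_mod_cast hp
        linarith
      have hpn : (p:ℝ)^n = (p:ℝ)^(n-1) * p := by
        rw [← pow_succ]
        congr 1
        omega
      have hpn1 : (0:ℝ) < (p:ℝ)^(n-1) := by positivity
      calc ((p:ℝ)^n - 1) * ((p:ℝ)^m)⁻¹ ≤ (p:ℝ)^n * ((p:ℝ)^m)⁻¹ := by nlinarith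
        _ = (p:ℝ)^(n-1) * p * ((p:ℝ)^m)⁻¹ := by rw [hpn]
        _ ≤ (p:ℝ)^(n-1) * (2*((p:ℝ)-1)) * ((p:ℝ)^m)⁻¹ := by gcongr
        _ = 2 * ((p:ℝ)^(n-1) * ((p:ℝ)^m)⁻¹) * ((p:ℝ)-1) := by ring
    linarith
end

section
/- Let F be a real quadratic number field with ring of integers O_F, let p be an odd prime that does not divide the discriminant of F, and let ε ∈ O_Fˣ be a fundamental unit, i.e. every unit u ∈ O_Fˣ equals ε^n or −ε^n for some integer n. Then ε^{p²−1} ≡ 1 (mod p²O_F) if and only if every unit u ∈ O_Fˣ with u ≡ 1 (mod pO_F) satisfies u ≡ 1 (mod p²O_F). -/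
/-!
Since `p ∤ disc F`, the trace form of `O_F` stays nondegenerate modulo `p`; nilpotents of
`O_F / p` lie in its kernel, so `O_F / p` is reduced, hence a product of finite fields of degree
at most `2` over `𝔽_p`, and `x ^ p² ≡ x (mod p)` on `O_F`. Thus `ε ^ (p² - 1) ≡ 1 (mod p)`,
which gives one direction. Conversely, if `u ≡ 1 (mod p)` then `u ^ p ≡ 1 (mod p²)`, while
`u ^ 2` is a power of `ε`, so `u ^ (2 (p² - 1)) ≡ 1 (mod p²)`; as `p` is prime to `2 (p² - 1)`,
`u ≡ 1 (mod p²)`.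
-/

open NumberField Module
open scoped Matrix

theorem Algebra.prime_dvd_trace_of_pow_mem {S ι : Type*} [CommRing S] [Fintype ι]
    [DecidableEq ι] (b : Basis ι ℤ S) {p : ℕ} (hp : p.Prime) {w : S} {k : ℕ}
    (hw : w ^ k ∈ Ideal.span {(p : S)}) : (p : ℤ) ∣ Algebra.trace ℤ S w := by
  have := Fact.mk hp
  obtain ⟨t, ht⟩ := Ideal.mem_span_singleton'.mp hw
  let f := (Int.castRingHom (ZMod p)).mapMatrix (m := ι)
  have hnil : IsNilpotent (f (Algebra.leftMulMatrix b w)) :=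
    ⟨k, by rw [← map_pow, ← map_pow, ← ht, map_mul, map_mul, map_natCast, map_natCast,
      ← map_natCast (algebraMap (ZMod p) _), ZMod.natCast_self, map_zero, mul_zero]⟩
  rw [Algebra.trace_eq_matrix_trace b, ← ZMod.intCast_zmod_eq_zero_iff_dvd]
  have := (Matrix.isNilpotent_trace_of_isNilpotent hnil).eq_zero
  rwa [RingHom.mapMatrix_apply, ← AddMonoidHom.map_trace] at this

theorem Algebra.mem_span_of_prime_dvd_trace_mul {S ι : Type*} [CommRing S] [Fintype ι]
    [DecidableEq ι] (b : Basis ι ℤ S) {p : ℕ} (hp : p.Prime)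
    (hdisc : ¬ (p : ℤ) ∣ Algebra.discr ℤ b) {z : S}
    (hz : ∀ i, (p : ℤ) ∣ Algebra.trace ℤ S (z * b i)) : z ∈ Ideal.span {(p : S)} := by
  have := Fact.mk hp
  let f := Int.castRingHom (ZMod p)
  have hdet : (f.mapMatrix (Algebra.traceMatrix ℤ b)).det ≠ 0 := by
    rwa [← RingHom.map_det, ← Algebra.discr_def, ne_eq, eq_intCast,
      ZMod.intCast_zmod_eq_zero_iff_dvd]
  have hker : f.mapMatrix (Algebra.traceMatrix ℤ b) *ᵥ (f ∘ b.equivFun z) = 0 := by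
    funext i
    rw [RingHom.mapMatrix_apply, ← RingHom.map_mulVec, Algebra.traceMatrix_of_basis_mulVec]
    simpa [f, ZMod.intCast_zmod_eq_zero_iff_dvd] using hz i
  have hcoord := Matrix.eq_zero_of_mulVec_eq_zero hdet hker
  rw [← b.sum_repr z]
  refine Ideal.sum_mem _ fun i _ => ?_
  obtain ⟨c, hc⟩ := (ZMod.intCast_zmod_eq_zero_iff_dvd _ p).mp (congrFun hcoord i)
  rw [Basis.equivFun_apply] at hc
  rw [hc, zsmul_eq_mul]
  exact Ideal.mul_mem_right _ _ (Ideal.mem_span_singleton.mpr ⟨c, by push_cast; ring⟩)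

theorem NumberField.isRadical_span_prime (K : Type*) [Field K] [NumberField K] {p : ℕ}
    (hp : p.Prime) (hdisc : ¬ (p : ℤ) ∣ discr K) : (Ideal.span {(p : 𝓞 K)}).IsRadical := by
  rintro z ⟨k, hk⟩
  refine Algebra.mem_span_of_prime_dvd_trace_mul (RingOfIntegers.basis K) hp hdisc fun i => ?_
  refine Algebra.prime_dvd_trace_of_pow_mem (RingOfIntegers.basis K) hp (k := k) ?_
  rw [mul_pow]
  exact Ideal.mul_mem_right _ _ hk

theorem FiniteField.pow_prime_pow_factorial_eq_self {K : Type*} [Field K] [Finite K] {p n : ℕ}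
    (hp : p.Prime) (hpK : (p : K) = 0) (hcard : Nat.card K ≤ p ^ n) (x : K) :
    x ^ p ^ n.factorial = x := by
  have : CharP K p := (CharP.charP_iff_prime_eq_zero hp).mpr hpK
  have := Fintype.ofFinite K
  obtain ⟨d, -, hd⟩ := FiniteField.card K p
  have hdn : (d : ℕ) ≤ n := by
    rwa [Nat.card_eq_fintype_card, hd, Nat.pow_le_pow_iff_right hp.one_lt] at hcard
  obtain ⟨m, hm⟩ := Nat.dvd_factorial d.pos hdn
  rw [hm, pow_mul, ← hd, FiniteField.pow_card_pow]

theorem pow_prime_pow_factorial_eq_self {R : Type*} [CommRing R] [IsReduced R] [Finite R]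
    {p n : ℕ} (hp : p.Prime) (hpR : (p : R) = 0) (hcard : Nat.card R ≤ p ^ n) (y : R) :
    y ^ p ^ n.factorial = y := by
  suffices y ^ p ^ n.factorial - y ∈ nilradical R by
    rwa [nilradical_eq_zero, Ideal.zero_eq_bot, Ideal.mem_bot, sub_eq_zero] at this
  rw [nilradical_eq_sInf]
  refine Submodule.mem_sInf.mpr fun P (hP : Ideal.IsPrime P) => ?_
  have : Finite (R ⧸ P) := Finite.of_surjective _ Ideal.Quotient.mk_surjective
  let := (Finite.isField_of_domain (R ⧸ P)).toField
  rw [← Ideal.Quotient.eq_zero_iff_mem, map_sub, map_pow, sub_eq_zero]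
  refine FiniteField.pow_prime_pow_factorial_eq_self hp ?_ ?_ _
  · rw [← map_natCast (Ideal.Quotient.mk P), hpR, map_zero]
  · exact (Nat.card_le_card_of_surjective _ Ideal.Quotient.mk_surjective).trans hcard

theorem NumberField.pow_prime_pow_factorial_sub_mem (K : Type*) [Field K] [NumberField K] {p : ℕ}
    (hp : p.Prime) (hdisc : ¬ (p : ℤ) ∣ discr K) (x : 𝓞 K) :
    x ^ p ^ (finrank ℚ K).factorial - x ∈ Ideal.span {(p : 𝓞 K)} := by
  have := (Ideal.isRadical_iff_quotient_reduced _).mp (isRadical_span_prime K hp hdisc)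
  have hcard : Nat.card (𝓞 K ⧸ Ideal.span {(p : 𝓞 K)}) = p ^ finrank ℚ K := by
    rw [← Submodule.cardQuot_apply, ← Ideal.absNorm_apply, Ideal.absNorm_span_natCast,
      RingOfIntegers.rank]
  have : Finite (𝓞 K ⧸ Ideal.span {(p : 𝓞 K)}) :=
    Nat.finite_of_card_ne_zero (hcard ▸ (pow_pos hp.pos _).ne')
  have hp0 : (p : 𝓞 K ⧸ Ideal.span {(p : 𝓞 K)}) = 0 :=
    Ideal.Quotient.eq_zero_iff_mem.mpr (Ideal.mem_span_singleton_self _)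
  rw [← Ideal.Quotient.eq_zero_iff_mem, map_sub, map_pow, sub_eq_zero]
  exact pow_prime_pow_factorial_eq_self hp hp0 hcard.le _

theorem eq_one_of_pow_eq_one_of_sq_eq_zpow {G : Type*} [Group G] {ε u : G} {p m : ℕ}
    (hcop : p.Coprime (2 * m)) (hε : ε ^ m = 1) (hu : u ^ p = 1) (hsq : ∃ n : ℤ, u ^ 2 = ε ^ n) :
    u = 1 := by
  obtain ⟨n, hn⟩ := hsq
  have hu2m : u ^ (2 * m) = 1 := by
    rw [pow_mul, hn, ← zpow_natCast, ← zpow_mul, mul_comm, zpow_mul, zpow_natCast, hε, one_zpow]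
  simpa [hcop] using pow_gcd_eq_one.mpr ⟨hu, hu2m⟩

theorem Ideal.units_map_mk_eq_one_iff {R : Type*} [CommRing R] (I : Ideal R) (v : Rˣ) :
    Units.map (Ideal.Quotient.mk I : R →* R ⧸ I) v = 1 ↔ (v : R) - 1 ∈ I := by
  rw [Units.ext_iff, Units.coe_map, Units.val_one, ← map_one (Ideal.Quotient.mk I)]
  exact Ideal.Quotient.mk_eq_mk_iff_sub_mem _ _

theorem Units.sub_one_mem_span_sq_of_sub_one_mem_span {R : Type*} [CommRing R] {p m : ℕ}
    (hcop : p.Coprime (2 * m)) {ε u : Rˣ} (hε : (ε : R) ^ m - 1 ∈ Ideal.span {(p : R) ^ 2})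
    (hu : (u : R) - 1 ∈ Ideal.span {(p : R)}) (hsq : ∃ n : ℤ, u ^ 2 = ε ^ n) :
    (u : R) - 1 ∈ Ideal.span {(p : R) ^ 2} := by
  let red := Units.map
    (Ideal.Quotient.mk (Ideal.span {(p : R) ^ 2}) : R →* R ⧸ Ideal.span {(p : R) ^ 2})
  rw [← Ideal.units_map_mk_eq_one_iff]
  refine eq_one_of_pow_eq_one_of_sq_eq_zpow (ε := red ε) hcop ?_ ?_ ?_
  · rwa [← map_pow, Ideal.units_map_mk_eq_one_iff, Units.val_pow_eq_pow_val]
  · rw [← map_pow, Ideal.units_map_mk_eq_one_iff, Units.val_pow_eq_pow_val,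
      Ideal.mem_span_singleton]
    simpa using dvd_sub_pow_of_dvd_sub (Ideal.mem_span_singleton.mp hu) 1
  · obtain ⟨n, hn⟩ := hsq
    exact ⟨n, by rw [← map_pow, hn, map_zpow]⟩

theorem wieferich_criterion_real_quadratic_general (F : Type*) [Field F] [NumberField F]
    (hdeg : Module.finrank ℚ F = 2)
    (p : ℕ) (hp : p.Prime) (hodd : p ≠ 2)
    (hdisc : ¬ ((p : ℤ) ∣ NumberField.discr F))
    (ε : (𝓞 F)ˣ)
    (hfund : ∀ u : (𝓞 F)ˣ, ∃ n : ℤ, u = ε ^ n ∨ u = -ε ^ n) :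
    ((ε : 𝓞 F) ^ (p ^ 2 - 1) - 1 ∈ Ideal.span {(p : 𝓞 F) ^ 2}) ↔
      ∀ u : (𝓞 F)ˣ, (u : 𝓞 F) - 1 ∈ Ideal.span {(p : 𝓞 F)} →
        (u : 𝓞 F) - 1 ∈ Ideal.span {(p : 𝓞 F) ^ 2} := by
  have hp2 : 1 ≤ p ^ 2 := Nat.one_le_pow _ _ hp.pos
  constructor
  · intro hε u hu
    have hcop : p.Coprime (2 * (p ^ 2 - 1)) :=
      ((Nat.coprime_primes hp Nat.prime_two).mpr hodd).mul_right
        (((Nat.coprime_self_sub_right hp2).mpr (Nat.coprime_one_right _)).coprime_dvd_left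
          (dvd_pow_self p two_ne_zero))
    refine Units.sub_one_mem_span_sq_of_sub_one_mem_span hcop hε hu ?_
    obtain ⟨n, rfl | rfl⟩ := hfund u
    · exact ⟨2 * n, by rw [zpow_mul', zpow_ofNat]⟩
    · exact ⟨2 * n, by rw [neg_sq, zpow_mul', zpow_ofNat]⟩
  · intro h
    have hfrob := pow_prime_pow_factorial_sub_mem F hp hdisc ε
    rw [hdeg, Nat.factorial_two, ← Nat.sub_add_cancel hp2, pow_succ',
      ← mul_sub_one, Ideal.unit_mul_mem_iff_mem _ ε.isUnit] at hfrob
    rw [← Units.val_pow_eq_pow_val] at hfrob ⊢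
    exact h _ hfrob

/-- Let `F` be a real quadratic field, `p` an odd prime not dividing the discriminant of
`F`, and `ε` a fundamental unit of `F`. Then `ε^(p²−1) ≡ 1 (mod p²O_F)` if and only if
every unit `u` of `O_F` with `u ≡ 1 (mod pO_F)` satisfies `u ≡ 1 (mod p²O_F)`.
(This is the Wieferich-type criterion for the nonvanishing of `H²(G_{F,p}, Z/pZ)`.) -/
theorem wieferich_criterion_real_quadratic (F : Type*) [Field F] [NumberField F]
    (hdeg : Module.finrank ℚ F = 2)
    (hreal : ∀ φ : F →+* ℂ, ∀ x : F, (φ x).im = 0)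
    (p : ℕ) (hp : p.Prime) (hodd : p ≠ 2)
    (hdisc : ¬ ((p : ℤ) ∣ NumberField.discr F))
    (ε : (𝓞 F)ˣ)
    (hfund : ∀ u : (𝓞 F)ˣ, ∃ n : ℤ, u = ε ^ n ∨ u = -ε ^ n) :
    ((ε : 𝓞 F) ^ (p ^ 2 - 1) - 1 ∈ Ideal.span {(p : 𝓞 F) ^ 2}) ↔
      ∀ u : (𝓞 F)ˣ, (u : 𝓞 F) - 1 ∈ Ideal.span {(p : 𝓞 F)} →
        (u : 𝓞 F) - 1 ∈ Ideal.span {(p : 𝓞 F) ^ 2} :=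
  wieferich_criterion_real_quadratic_general F hdeg p hp hodd hdisc ε hfund
end

section
/- Let k be a field whose characteristic is neither 2 nor 3. Let V = {f : Fin 3 → k : f(0) + f(1) + f(2) = 0}, a 2-dimensional k-vector space on which the symmetric group S₃ = Perm(Fin 3) acts by permuting coordinates (σ·f = f ∘ σ⁻¹); denote this representation by ρ. Let Ad⁰(V) be the space of k-linear endomorphisms of V of trace zero, with S₃ acting by conjugation: σ·φ = ρ(σ) ∘ φ ∘ ρ(σ)⁻¹. Then Ad⁰(V) is isomorphic as a representation of S₃ to the direct sum V ⊕ sgn: there exists a k-linear isomorphism e : Ad⁰(V) → V × k such that for all σ ∈ S₃ and φ ∈ Ad⁰(V), e(σ·φ) = (σ·(e φ)₁, sgn(σ)·(e φ)₂), where sgn(σ) ∈ {±1} ⊆ k is the sign of the permutation σ. -/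
/-- The linear functional `f ↦ f 0 + f 1 + f 2` on `Fin 3 → k`. -/
noncomputable def sumForm (k : Type*) [Field k] : (Fin 3 → k) →ₗ[k] k :=
  (LinearMap.proj (0 : Fin 3) : (Fin 3 → k) →ₗ[k] k) +
    (LinearMap.proj (1 : Fin 3) : (Fin 3 → k) →ₗ[k] k) +
    (LinearMap.proj (2 : Fin 3) : (Fin 3 → k) →ₗ[k] k)

/-- The standard 2-dimensional representation space of `S₃`: the sum-zero functions
`Fin 3 → k`. -/
noncomputable def stdRep (k : Type*) [Field k] : Submodule k (Fin 3 → k) :=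
  LinearMap.ker (sumForm k)

/-- The action of `S₃ = Perm (Fin 3)` on the standard representation, `σ·f = f ∘ σ⁻¹`. -/
noncomputable def rho (k : Type*) [Field k] (σ : Equiv.Perm (Fin 3)) :
    stdRep k →ₗ[k] stdRep k where
  toFun f := ⟨fun i => (f : Fin 3 → k) (σ⁻¹ i), by
    have key : ∀ g : Fin 3 → k, sumForm k g = ∑ i, g i := fun g => by
      simp [sumForm, Fin.sum_univ_three]
    have hf : sumForm k (f : Fin 3 → k) = 0 := f.2
    have : sumForm k (fun i => (f : Fin 3 → k) (σ⁻¹ i)) = 0 := by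
      rw [key]
      rw [Equiv.sum_comp σ⁻¹ (fun i => (f : Fin 3 → k) i)]
      rw [← key, hf]
    exact this⟩
  map_add' f g := by
    apply Subtype.ext
    funext i
    rfl
  map_smul' a f := by
    apply Subtype.ext
    funext i
    rfl

/-! Two `S₃`-equivariant constructions produce trace-zero endomorphisms of `V`. The pointwise
product of `k³`, pushed back into `V`, gives `v ↦ (w ↦ 3 v w - ⟨v, w⟩ 𝟙)`; it is equivariant
because permutations respect pointwise products and the dot product. The endomorphism
`J w = (w₁ - w₂, w₂ - w₀, w₀ - w₁)` is the cross product with `(1, 1, 1)`, so conjugating it by a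
permutation multiplies it by the sign. Hence `(v, t) ↦ (w ↦ 3 v w - ⟨v, w⟩ 𝟙) + t J` maps
`V ⊕ sgn` equivariantly into `Ad⁰ V`. Evaluating on a basis shows it is injective once `3 ≠ 0`,
and both sides have dimension `3`. -/

open Module LinearMap

theorem finrank_ker_trace_add_one {K V : Type*} [Field K] [AddCommGroup V] [Module K V]
    [FiniteDimensional K V] [Nontrivial V] :
    finrank K (ker (trace K V)) + 1 = finrank K V * finrank K V := by
  obtain ⟨x, hx⟩ := exists_ne (0 : V)
  obtain ⟨f, hf⟩ : ∃ f : Dual K V, f x ≠ 0 := by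
    by_contra! h
    exact hx ((forall_dual_apply_eq_zero_iff K x).mp h)
  have htrace : trace K V ≠ 0 := fun h => hf <| by
    rw [← trace_smulRight f x, h, LinearMap.zero_apply]
  rw [Dual.finrank_ker_add_one_of_ne_zero htrace, finrank_linearMap]

theorem Equiv.Perm.fin_three_add_one_add_two (σ : Equiv.Perm (Fin 3)) (j : Fin 3) :
    (σ (j + 1) = σ j + 1 ∧ σ (j + 2) = σ j + 2 ∧ Equiv.Perm.sign σ = 1) ∨
    (σ (j + 1) = σ j + 2 ∧ σ (j + 2) = σ j + 1 ∧ Equiv.Perm.sign σ = -1) := by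
  revert σ j
  decide

namespace StdRep

variable (k : Type*) [Field k]

theorem sumForm_apply (f : Fin 3 → k) : sumForm k f = ∑ i, f i := by
  simp [sumForm, Fin.sum_univ_three]

theorem mem_iff (f : Fin 3 → k) : f ∈ stdRep k ↔ ∑ i, f i = 0 := by
  rw [stdRep, mem_ker, sumForm_apply]

theorem coord_two (v : stdRep k) :
    (v : Fin 3 → k) 2 = -(v : Fin 3 → k) 0 - (v : Fin 3 → k) 1 := by
  have hv := (mem_iff k v).mp v.2
  rw [Fin.sum_univ_three] at hv
  linear_combination hv

@[simp]
theorem rho_apply (σ : Equiv.Perm (Fin 3)) (f : stdRep k) (i : Fin 3) :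
    (rho k σ f : Fin 3 → k) i = (f : Fin 3 → k) (σ⁻¹ i) := rfl

/-- Three times the projection of `k³` onto `stdRep k` along the constants, so that no
division by `3` is needed. -/
noncomputable def proj : (Fin 3 → k) →ₗ[k] stdRep k :=
  codRestrict (stdRep k) ((3 : k) • LinearMap.id - (sumForm k).smulRight 1) fun f => by
    simp [mem_iff, sumForm_apply, Finset.mul_sum]

@[simp]
theorem proj_apply (f : Fin 3 → k) (i : Fin 3) :
    (proj k f : Fin 3 → k) i = 3 * f i - ∑ j, f j := by
  simp [proj, sumForm_apply]

noncomputable def symMul : stdRep k →ₗ[k] stdRep k →ₗ[k] stdRep k :=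
  ((LinearMap.mul k (Fin 3 → k)).compl₁₂ (stdRep k).subtype (stdRep k).subtype).compr₂ (proj k)

@[simp]
theorem symMul_apply (v w : stdRep k) (i : Fin 3) :
    (symMul k v w : Fin 3 → k) i = 3 * ((v : Fin 3 → k) i * (w : Fin 3 → k) i) -
      ∑ j, (v : Fin 3 → k) j * (w : Fin 3 → k) j := by
  simp [symMul]

noncomputable def signEnd : Module.End k (stdRep k) where
  toFun w := ⟨fun i => (w : Fin 3 → k) (i + 1) - (w : Fin 3 → k) (i + 2), by
    simp only [mem_iff, Fin.sum_univ_three, Fin.reduceAdd]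
    ring⟩
  map_add' v w := by
    ext
    simp only [Submodule.coe_add, Pi.add_apply, AddMemClass.mk_add_mk]
    ring
  map_smul' c w := by
    ext
    simp only [SetLike.val_smul, Pi.smul_apply, smul_eq_mul, RingHom.id_apply, SetLike.mk_smul_mk]
    ring

@[simp]
theorem signEnd_apply (w : stdRep k) (i : Fin 3) :
    (signEnd k w : Fin 3 → k) i = (w : Fin 3 → k) (i + 1) - (w : Fin 3 → k) (i + 2) := rfl

theorem rho_comp_symMul_comp (σ : Equiv.Perm (Fin 3)) (v : stdRep k) :
    rho k σ ∘ₗ symMul k v ∘ₗ rho k σ⁻¹ = symMul k (rho k σ v) := by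
  ext w i
  simp only [comp_apply, rho_apply, symMul_apply, inv_inv, Equiv.Perm.coe_inv,
    Equiv.apply_symm_apply]
  rw [← Equiv.sum_comp σ fun j => (v : Fin 3 → k) (σ.symm j) * (w : Fin 3 → k) j]
  simp

theorem rho_comp_signEnd_comp (σ : Equiv.Perm (Fin 3)) :
    rho k σ ∘ₗ signEnd k ∘ₗ rho k σ⁻¹ = ((Equiv.Perm.sign σ : ℤ) : k) • signEnd k := by
  ext w i
  obtain ⟨j, rfl⟩ := σ.surjective i
  simp only [comp_apply, rho_apply, signEnd_apply, inv_inv, Equiv.Perm.coe_inv,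
    Equiv.symm_apply_apply, LinearMap.smul_apply, SetLike.val_smul, Pi.smul_apply, smul_eq_mul]
  rcases σ.fin_three_add_one_add_two j with ⟨h1, h2, hσ⟩ | ⟨h1, h2, hσ⟩ <;>
    simp [h1, h2, hσ]

noncomputable def equivFinTwo : stdRep k ≃ₗ[k] (Fin 2 → k) where
  toFun v := ![(v : Fin 3 → k) 0, (v : Fin 3 → k) 1]
  invFun c := ⟨![c 0, c 1, -c 0 - c 1], by simp [mem_iff, Fin.sum_univ_three]⟩
  map_add' v w := by ext i; fin_cases i <;> simp
  map_smul' c v := by ext i; fin_cases i <;> simp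
  left_inv v := by ext i; fin_cases i <;> simp [coord_two]
  right_inv c := by ext i; fin_cases i <;> simp

noncomputable def basis : Basis (Fin 2) k (stdRep k) := .ofEquivFun (equivFinTwo k)

theorem finrank_eq_two : finrank k (stdRep k) = 2 := by
  simp [finrank_eq_card_basis (basis k)]

@[simp]
theorem basis_zero : (basis k 0 : Fin 3 → k) = ![1, 0, -1] := by
  ext i; fin_cases i <;> simp [basis, equivFinTwo]

@[simp]
theorem basis_one : (basis k 1 : Fin 3 → k) = ![0, 1, -1] := by
  ext i; fin_cases i <;> simp [basis, equivFinTwo]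

theorem trace_eq (φ : Module.End k (stdRep k)) :
    trace k (stdRep k) φ = (φ (basis k 0) : Fin 3 → k) 0 + (φ (basis k 1) : Fin 3 → k) 1 := by
  simp [trace_eq_matrix_trace k (basis k), Matrix.trace, toMatrix_apply, basis, equivFinTwo]

theorem trace_symMul (v : stdRep k) : trace k (stdRep k) (symMul k v) = 0 := by
  simp only [trace_eq, symMul_apply, basis_zero, basis_one, Fin.sum_univ_three, coord_two k v,
    Matrix.cons_val_zero, Matrix.cons_val_one, Matrix.cons_val, Fin.isValue]
  ring

theorem trace_signEnd : trace k (stdRep k) (signEnd k) = 0 := by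
  simp [trace_eq]

noncomputable def toEnd : stdRep k × k →ₗ[k] Module.End k (stdRep k) :=
  (symMul k).coprod (toSpanSingleton k _ (signEnd k))

theorem toEnd_apply (x : stdRep k × k) : toEnd k x = symMul k x.1 + x.2 • signEnd k := rfl

theorem trace_toEnd (x : stdRep k × k) : trace k (stdRep k) (toEnd k x) = 0 := by
  simp [toEnd_apply, trace_symMul, trace_signEnd]

theorem toEnd_injective (h3 : (3 : k) ≠ 0) : Function.Injective (toEnd k) := by
  rw [injective_iff_map_eq_zero]
  rintro ⟨v, t⟩ h
  have h0 := congr_arg (fun φ : Module.End k (stdRep k) => (φ (basis k 0) : Fin 3 → k)) h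
  have h1 := congr_arg (fun φ : Module.End k (stdRep k) => (φ (basis k 1) : Fin 3 → k)) h
  have h00 := congr_fun h0 0
  have h02 := congr_fun h0 2
  have h11 := congr_fun h1 1
  have h12 := congr_fun h1 2
  simp only [toEnd_apply, LinearMap.add_apply, LinearMap.smul_apply, Submodule.coe_add,
    SetLike.val_smul, Pi.add_apply, Pi.smul_apply, smul_eq_mul, symMul_apply, signEnd_apply,
    basis_zero, basis_one, Fin.sum_univ_three, coord_two k v, Matrix.cons_val_zero,
    Matrix.cons_val_one, Matrix.cons_val, Fin.isValue, Fin.reduceAdd, LinearMap.zero_apply,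
    ZeroMemClass.coe_zero, Pi.zero_apply] at h00 h02 h11 h12
  have hv0 : (v : Fin 3 → k) 0 = 0 :=
    (mul_eq_zero.mp (by linear_combination h12 - h11)).resolve_left h3
  have hv1 : (v : Fin 3 → k) 1 = 0 :=
    (mul_eq_zero.mp (by linear_combination h02 - h00)).resolve_left h3
  have hv : v = 0 := (equivFinTwo k).injective <| by
    ext i; fin_cases i <;> simp [equivFinTwo, hv0, hv1]
  have ht : t = 0 := by linear_combination h00 - hv0 + hv1
  simp [hv, ht]

theorem range_toEnd (h3 : (3 : k) ≠ 0) : range (toEnd k) = ker (trace k (stdRep k)) := by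
  refine Submodule.eq_of_le_of_finrank_eq (V := Module.End k (stdRep k)) ?_ ?_
  · rintro _ ⟨x, rfl⟩
    exact trace_toEnd k x
  · have : Nontrivial (stdRep k) := nontrivial_of_finrank_eq_succ (finrank_eq_two k)
    have hker := finrank_ker_trace_add_one (K := k) (V := stdRep k)
    rw [finrank_eq_two] at hker
    rw [finrank_range_of_inj (toEnd_injective k h3), finrank_prod, finrank_eq_two, finrank_self]
    -- the two `ker`s carry different (defeq) instances, so `omega` alone sees distinct atoms
    exact (show finrank k (ker (trace k (stdRep k))) = 2 + 1 by omega).symm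

noncomputable def equivAd0 (h3 : (3 : k) ≠ 0) : (stdRep k × k) ≃ₗ[k] ker (trace k (stdRep k)) :=
  (LinearEquiv.ofInjective _ (toEnd_injective k h3)).trans (LinearEquiv.ofEq _ _ (range_toEnd k h3))

theorem coe_equivAd0_apply (h3 : (3 : k) ≠ 0) (x : stdRep k × k) :
    (equivAd0 k h3 x : Module.End k (stdRep k)) = toEnd k x := rfl

theorem rho_comp_toEnd_comp (σ : Equiv.Perm (Fin 3)) (x : stdRep k × k) :
    rho k σ ∘ₗ toEnd k x ∘ₗ rho k σ⁻¹ = toEnd k (rho k σ x.1, (Equiv.Perm.sign σ : ℤ) * x.2) := by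
  simp only [toEnd_apply, add_comp, comp_add, smul_comp, comp_smul, rho_comp_symMul_comp,
    rho_comp_signEnd_comp, smul_smul, mul_comm]

end StdRep

theorem ad0_iso_std_sum_sign_general (k : Type*) [Field k]
    (h3 : ringChar k ≠ 3) :
    ∃ e : LinearMap.ker (LinearMap.trace k (stdRep k)) ≃ₗ[k] (stdRep k × k),
      ∀ (σ : Equiv.Perm (Fin 3)) (φ : stdRep k →ₗ[k] stdRep k)
        (hφ : φ ∈ LinearMap.ker (LinearMap.trace k (stdRep k)))
        (hφ' : rho k σ ∘ₗ φ ∘ₗ rho k σ⁻¹ ∈ LinearMap.ker (LinearMap.trace k (stdRep k))),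
        e ⟨rho k σ ∘ₗ φ ∘ₗ rho k σ⁻¹, hφ'⟩ =
          (rho k σ (e ⟨φ, hφ⟩).1, ((Equiv.Perm.sign σ : ℤ) : k) * (e ⟨φ, hφ⟩).2) := by
  have h3' : (3 : k) ≠ 0 := fun h =>
    h3 (CharP.ringChar_of_prime_eq_zero Nat.prime_three (by exact_mod_cast h))
  refine ⟨(StdRep.equivAd0 k h3').symm, fun σ φ hφ hφ' => ?_⟩
  have hφ_eq : StdRep.toEnd k ((StdRep.equivAd0 k h3').symm ⟨φ, hφ⟩) = φ := by
    rw [← StdRep.coe_equivAd0_apply k h3', LinearEquiv.apply_symm_apply]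
  rw [LinearEquiv.symm_apply_eq, Subtype.ext_iff, StdRep.coe_equivAd0_apply,
    ← StdRep.rho_comp_toEnd_comp, hφ_eq]

/-- `Ad⁰` of the standard 2-dimensional representation of `S₃` (trace-zero endomorphisms
with the conjugation action) is isomorphic, as a representation of `S₃`, to the direct sum
of the standard representation and the sign character. -/
theorem ad0_iso_std_sum_sign (k : Type*) [Field k]
    (h2 : ringChar k ≠ 2) (h3 : ringChar k ≠ 3) :
    ∃ e : LinearMap.ker (LinearMap.trace k (stdRep k)) ≃ₗ[k] (stdRep k × k),
      ∀ (σ : Equiv.Perm (Fin 3)) (φ : stdRep k →ₗ[k] stdRep k)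
        (hφ : φ ∈ LinearMap.ker (LinearMap.trace k (stdRep k)))
        (hφ' : rho k σ ∘ₗ φ ∘ₗ rho k σ⁻¹ ∈ LinearMap.ker (LinearMap.trace k (stdRep k))),
        e ⟨rho k σ ∘ₗ φ ∘ₗ rho k σ⁻¹, hφ'⟩ =
          (rho k σ (e ⟨φ, hφ⟩).1, ((Equiv.Perm.sign σ : ℤ) : k) * (e ⟨φ, hφ⟩).2) :=
  ad0_iso_std_sum_sign_general k h3
end
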